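/- arXiv:1511.02521 — 2 statements merged into one kernel-verified Lean document; each statement's English description precedes it below -/
import Mathlib

section
/- Let ε = (ε₁,…,ε_k) be a list over {1, −1} and let ε̃ be its normal form under repeated deletion of adjacent equal pairs. Then the length of ε̃ equals the absolute value of the alternating sum: |ε̃| = |∑_{i=1}^{k} (−1)^{i+1} εᵢ|. -/
/-- The alternating sum `∑ i, (-1)^(i+1) εᵢ` of a list `(ε₁, …, ε_k)` (1-indexed). -/
def altSum : List ℤ → ℤ
  | [] => 0
  | x :: xs => x - altSum xs

/-- One step of the elimination procedure: delete two adjacent equal entries. -/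
def Red (l m : List ℤ) : Prop :=
  ∃ (l₁ l₂ : List ℤ) (a : ℤ), l = l₁ ++ a :: a :: l₂ ∧ m = l₁ ++ l₂

lemma altSum_append (l₁ l₂ : List ℤ) :
    altSum (l₁ ++ l₂) = altSum l₁ + (-1 : ℤ) ^ l₁.length * altSum l₂ := by
  induction l₁ with
  | nil => simp [altSum]
  | cons x xs ih => simp [altSum, ih, pow_succ]; ring

lemma red_altSum {l m : List ℤ} (h : Red l m) : altSum l = altSum m := by
  obtain ⟨l₁, l₂, a, rfl, rfl⟩ := h
  simp [altSum_append, altSum]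

lemma red_subset {l m : List ℤ} (h : Red l m) : m ⊆ l := by
  obtain ⟨l₁, l₂, a, rfl, rfl⟩ := h
  intro x hx
  rcases List.mem_append.1 hx with h | h
  · exact List.mem_append.2 (Or.inl h)
  · exact List.mem_append.2 (Or.inr (by simp [h]))

lemma nf_altSum : ∀ m : List ℤ, (∀ x ∈ m, x = 1 ∨ x = -1) →
    (∀ m', ¬ Red m m') → altSum m = m.length * m.headD 0
  | [], _, _ => by simp [altSum]
  | [x], _, _ => by simp [altSum]
  | x :: y :: rest, hm, hnf => by
    have hxy : x ≠ y := by
      rintro rfl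
      exact hnf rest ⟨[], rest, x, rfl, rfl⟩
    have hnf' : ∀ m', ¬ Red (y :: rest) m' := by
      rintro m' ⟨l₁, l₂, a, h1, rfl⟩
      exact hnf (x :: (l₁ ++ l₂)) ⟨x :: l₁, l₂, a, by simp [h1], rfl⟩
    have ih := nf_altSum (y :: rest) (fun z hz => hm z (List.mem_cons_of_mem x hz)) hnf'
    have hy : y = -x := by
      rcases hm x (by simp) with rfl | rfl <;> rcases hm y (by simp) with rfl | rfl <;>
        simp_all
    simp only [altSum, List.length_cons, List.headD] at ih ⊢
    rw [ih, hy]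
    push_cast
    ring

/-- The length of the normal form of a list over `{1, -1}` under repeated deletion of
adjacent equal pairs equals the absolute value of its alternating sum. -/
theorem length_normal_form_eq_abs_altSum (l m : List ℤ)
    (hl : ∀ x ∈ l, x = 1 ∨ x = -1)
    (hred : Relation.ReflTransGen Red l m)
    (hnf : ∀ m', ¬ Red m m') :
    (m.length : ℤ) = |altSum l| := by
  have hsum : altSum l = altSum m := by
    clear hnf hl
    induction hred with
    | refl => rfl
    | tail _ hstep ih => exact ih.trans (red_altSum hstep)
  have hsub : m ⊆ l := by
    clear hnf hl hsum
    induction hred with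
    | refl => exact fun _ h => h
    | tail _ hstep ih => exact fun x hx => ih (red_subset hstep hx)
  have hm : ∀ x ∈ m, x = 1 ∨ x = -1 := fun x hx => hl x (hsub hx)
  rw [hsum, nf_altSum m hm hnf]
  cases m with
  | nil => simp
  | cons a t =>
    rcases hm a (by simp) with rfl | rfl <;> simp
    · rw [abs_of_nonneg (by positivity)]
    · rw [show (-1 + -((t.length : ℤ)) : ℤ) = -((t.length : ℤ) + 1) by ring, abs_neg,
        abs_of_nonneg (by positivity)]
end

section
/- Let p₁ ≤ p₂ ≤ … ≤ p_{2m} be a nondecreasing sequence of nonnegative integers such that every odd integer occurs an even number of times among the pᵢ (i.e. for each odd q, #{i : pᵢ = q} is even). Set p'ᵢ = pᵢ + (i−1). Then the p'ᵢ are strictly increasing, and exactly m of the numbers p'₁, …, p'_{2m} are even (and exactly m are odd). -/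
private lemma card_filter_shift1 (n : ℕ) (f : ℕ → Prop) [DecidablePred f] :
    ((Finset.range (n+1)).filter f).card
      = ((Finset.range n).filter (fun i => f (i+1))).card + (if f 0 then 1 else 0) := by
  rw [Finset.card_filter, Finset.card_filter, Finset.sum_range_succ']

private lemma card_filter_shift2 (n : ℕ) (f : ℕ → Prop) [DecidablePred f] :
    ((Finset.range (n+2)).filter f).card
      = ((Finset.range n).filter (fun i => f (i+2))).card
        + (if f 0 then 1 else 0) + (if f 1 then 1 else 0) := by
  rw [show n+2 = (n+1)+1 from rfl, card_filter_shift1, card_filter_shift1]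
  have hc : ((Finset.range n).filter (fun i => f (i+1+1))).card
      = ((Finset.range n).filter (fun i => f (i+2))).card := rfl
  have h0 : (if f (0+1) then 1 else 0) = (if f 1 then 1 else 0) := rfl
  omega

private lemma card_filter_shift3 (n : ℕ) (f : ℕ → Prop) [DecidablePred f] :
    ((Finset.range (n+3)).filter f).card
      = ((Finset.range n).filter (fun i => f (i+3))).card
        + (if f 0 then 1 else 0) + (if f 1 then 1 else 0) + (if f 2 then 1 else 0) := by
  rw [show n+3 = (n+2)+1 from rfl, card_filter_shift1, card_filter_shift2]
  have hc : ((Finset.range n).filter (fun i => f (i+2+1))).card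
      = ((Finset.range n).filter (fun i => f (i+3))).card := rfl
  have h0 : (if f (0+1) then 1 else 0) = (if f 1 then 1 else 0) := rfl
  have h1 : (if f (1+1) then 1 else 0) = (if f 2 then 1 else 0) := rfl
  omega

private lemma even_shift (x y : ℕ) : Even (x + (y+2)) ↔ Even (x + y) := by
  simp only [Nat.even_iff]; omega

private lemma aux_count : ∀ (m : ℕ) (p : ℕ → ℕ),
    (∀ i j, i ≤ j → j < 2 * m → p i ≤ p j) →
    (∀ q, Odd q → Even (((Finset.range (2 * m)).filter (fun i => p i = q)).card)) →
    ((Finset.range (2 * m)).filter (fun i => Even (p i + i))).card = m := by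
  intro m
  induction m with
  | zero => intro p _ _; simp
  | succ m ih =>
    intro p hmono hodd
    have hsing : Odd (p 0) → p 0 ≠ p 1 → False := by
      intro hodd0 hne
      have hlt : p 0 < p 1 := lt_of_le_of_ne (hmono 0 1 (by omega) (by omega)) hne
      have hf : (Finset.range (2*(m+1))).filter (fun i => p i = p 0) = {0} := by
        ext i
        simp only [Finset.mem_filter, Finset.mem_range, Finset.mem_singleton]
        constructor
        · rintro ⟨hi, hpi⟩
          by_contra hne0
          have := hmono 1 i (by omega) hi
          omega
        · rintro rfl; exact ⟨by omega, rfl⟩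
      have := hodd (p 0) hodd0
      rw [hf] at this
      simp at this
    by_cases hpe : p 0 % 2 = p 1 % 2
    · -- remove indices 0 and 1
      have hrem : ∀ q, Odd q → ((p 0 = q) ↔ (p 1 = q)) := by
        intro q hq
        constructor
        · intro h0; by_contra h1
          exact hsing (h0 ▸ hq) (fun he => h1 (he ▸ h0))
        · intro h1
          have hodd0 : Odd (p 0) := by
            have : Odd (p 1) := h1 ▸ hq
            rw [Nat.odd_iff] at *; omega
          by_contra h0
          exact hsing hodd0 (fun he => h0 (he ▸ h1))
      have hmono'' : ∀ i j, i ≤ j → j < 2 * m → p (i+2) ≤ p (j+2) :=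
        fun i j hij hj => hmono _ _ (by omega) (by omega)
      have hodd'' : ∀ q, Odd q →
          Even (((Finset.range (2*m)).filter (fun i => p (i+2) = q)).card) := by
        intro q hq
        have hA := hodd q hq
        rw [show 2*(m+1) = 2*m+2 from by ring, card_filter_shift2] at hA
        rcases hrem q hq with ⟨h01, h10⟩
        rw [Nat.even_iff] at hA ⊢
        by_cases h0 : p 0 = q
        · rw [if_pos h0, if_pos (h01 h0)] at hA; omega
        · rw [if_neg h0, if_neg (fun h => h0 (h10 h))] at hA; omega
      have hih : ((Finset.range (2*m)).filter
          (fun i => Even (p (i+2) + i))).card = m := ih (fun i => p (i+2)) hmono'' hodd''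
      rw [show 2*(m+1) = 2*m+2 from by ring, card_filter_shift2]
      have hcongr : ((Finset.range (2*m)).filter (fun i => Even (p (i+2) + (i+2)))).card
          = ((Finset.range (2*m)).filter (fun i => Even (p (i+2) + i))).card := by
        congr 1
        apply Finset.filter_congr
        intro i _
        simpa using even_shift (p (i+2)) i
      rw [hcongr, hih]
      by_cases h0 : Even (p 0 + 0)
      · have h1 : ¬ Even (p 1 + 1) := by
          simp only [Nat.even_iff] at h0 ⊢; omega
        rw [if_pos h0, if_neg h1]
      · have h1 : Even (p 1 + 1) := by
          simp only [Nat.even_iff] at h0 ⊢; omega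
        rw [if_neg h0, if_pos h1]
    · -- p 0 even, p 1 odd : remove indices 1 and 2
      have hne01 : p 0 ≠ p 1 := fun h => hpe (by rw [h])
      have hp0even : p 0 % 2 = 0 := by
        by_contra h
        exact hsing (Nat.odd_iff.mpr (by omega)) hne01
      have hp1odd : Odd (p 1) := Nat.odd_iff.mpr (by omega)
      have h2 : 1 ≤ m ∧ p 2 = p 1 := by
        by_contra hcon
        rw [not_and_or] at hcon
        have hf : (Finset.range (2*(m+1))).filter (fun i => p i = p 1) = {1} := by
          ext i
          simp only [Finset.mem_filter, Finset.mem_range, Finset.mem_singleton]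
          constructor
          · rintro ⟨hi, hpi⟩
            by_contra hne1
            by_cases hi0 : i = 0
            · exact hne01 (hi0 ▸ hpi)
            · have hi2 : 2 ≤ i := by omega
              rcases hcon with hm | hp2
              · omega
              · have hle12 : p 1 ≤ p 2 := hmono 1 2 (by omega) (by omega)
                have := hmono 2 i hi2 hi
                omega
          · rintro rfl; exact ⟨by omega, rfl⟩
        have := hodd (p 1) hp1odd
        rw [hf] at this
        simp at this
      obtain ⟨hm1, hp21⟩ := h2
      obtain ⟨m', rfl⟩ : ∃ m', m = m' + 1 := ⟨m - 1, by omega⟩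
      set p'' : ℕ → ℕ := fun i => if i = 0 then p 0 else p (i+2) with hp''
      have hp''0 : p'' 0 = p 0 := rfl
      have hp''s : ∀ i, p'' (i+1) = p (i+3) := by
        intro i; simp [hp'', show i+1+2 = i+3 from rfl]
      have hmono'' : ∀ i j, i ≤ j → j < 2 * (m'+1) → p'' i ≤ p'' j := by
        intro i j hij hj
        rcases Nat.eq_zero_or_pos i with rfl | hi
        · rcases Nat.eq_zero_or_pos j with rfl | hj0
          · exact le_refl _
          · rw [hp''0, show j = (j-1)+1 from by omega, hp''s]
            exact hmono 0 ((j-1)+3) (by omega) (by omega)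
        · have hj0 : 1 ≤ j := le_trans hi hij
          rw [show i = (i-1)+1 from by omega, show j = (j-1)+1 from by omega, hp''s, hp''s]
          exact hmono _ _ (by omega) (by omega)
      have hodd'' : ∀ q, Odd q →
          Even (((Finset.range (2*(m'+1))).filter (fun i => p'' i = q)).card) := by
        intro q hq
        have hA := hodd q hq
        rw [show 2*(m'+1+1) = (2*m'+1)+3 from by ring, card_filter_shift3] at hA
        rw [show 2*(m'+1) = (2*m'+1)+1 from by ring, card_filter_shift1]
        have hcongr : ((Finset.range (2*m'+1)).filter (fun i => p'' (i+1) = q)).card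
            = ((Finset.range (2*m'+1)).filter (fun i => p (i+3) = q)).card := by
          congr 1
        rw [hcongr, hp''0]
        rw [Nat.even_iff] at hA ⊢
        rw [hp21] at hA
        by_cases h1 : p 1 = q
        · rw [if_pos h1] at hA; omega
        · rw [if_neg h1] at hA; omega
      have hih : ((Finset.range (2*(m'+1))).filter
          (fun i => Even (p'' i + i))).card = m' + 1 := ih p'' hmono'' hodd''
      rw [show 2*(m'+1+1) = (2*m'+1)+3 from by ring, card_filter_shift3]
      rw [show 2*(m'+1) = (2*m'+1)+1 from by ring, card_filter_shift1] at hih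
      have hcongr : ((Finset.range (2*m'+1)).filter (fun i => Even (p (i+3) + (i+3)))).card
          = ((Finset.range (2*m'+1)).filter (fun i => Even (p'' (i+1) + (i+1)))).card := by
        congr 1; apply Finset.filter_congr; intro i _
        rw [hp''s]
        simpa [show i+3 = (i+1)+2 from rfl] using even_shift (p (i+3)) (i+1)
      rw [hcongr]
      rw [hp''0] at hih
      rw [hp21]
      by_cases h1 : Even (p 1 + 1)
      · have h2' : ¬ Even (p 1 + 2) := by
          simp only [Nat.even_iff] at h1 ⊢; omega
        rw [if_pos h1, if_neg h2']
        omega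
      · have h2' : Even (p 1 + 2) := by
          simp only [Nat.even_iff] at h1 ⊢; omega
        rw [if_neg h1, if_pos h2']
        omega

/-- For a nondecreasing sequence `p₁ ≤ … ≤ p_{2m}` of nonnegative integers (given
0-indexed) in which every odd value occurs an even number of times, the shifted sequence
`p'ᵢ = pᵢ + (i-1)` is strictly increasing and contains exactly `m` even and `m` odd
entries. -/
theorem shifted_partition_parity_split (m : ℕ) (p : ℕ → ℕ)
    (hmono : ∀ i j, i ≤ j → j < 2 * m → p i ≤ p j)
    (hodd : ∀ q, Odd q → Even (((Finset.range (2 * m)).filter (fun i => p i = q)).card)) :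
    (∀ i j, i < j → j < 2 * m → p i + i < p j + j) ∧
    ((Finset.range (2 * m)).filter (fun i => Even (p i + i))).card = m ∧
    ((Finset.range (2 * m)).filter (fun i => Odd (p i + i))).card = m := by
  have heven := aux_count m p hmono hodd
  refine ⟨fun i j hij hj => ?_, heven, ?_⟩
  · have := hmono i j hij.le hj
    omega
  · have hpart := Finset.card_filter_add_card_filter_not
      (s := Finset.range (2*m)) (p := fun i => Even (p i + i))
    have hcongr : ((Finset.range (2*m)).filter (fun i => ¬ Even (p i + i))).card
        = ((Finset.range (2*m)).filter (fun i => Odd (p i + i))).card := by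
      congr 1; apply Finset.filter_congr; intro i _
      simp only [Nat.even_iff, Nat.odd_iff, eq_iff_iff]
      omega
    rw [heven, hcongr, Finset.card_range] at hpart
    omega
end
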